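/- arXiv:1904.04158 — 4 statements merged into one kernel-verified Lean document; each statement's English description precedes it below -/
import Mathlib

section
/- Let Q ∈ ℝ^{m×d} satisfy ‖Qᵀe_j‖_{ℓ2} ≤ ν√(d/m) for every 1 ≤ j ≤ m, and let E ∈ ℝ^{m×n} be such that Supp(E) ⊆ Supp(S*), where each column of S* has at most α₁·m nonzero entries. Then for every column index l ∈ {1,…,n}, ‖QᵀE e_l‖_{ℓ2} ≤ ν·α₁·√(md)·‖E‖_{ℓ∞}. -/
/-!
Expanding the column `E e_l` in the standard basis over its support, `QᵀE e_l` is a combination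
of at most `α₁ m` columns `Qᵀe_i`, each of norm at most `ν √(d/m)`, with coefficients bounded by
`‖E‖_{ℓ∞}`; the triangle inequality and `m √(d/m) = √(md)` give the bound.
-/

open Matrix
open scoped BigOperators

noncomputable def l2 {n : ℕ} (v : Fin n → ℝ) : ℝ := Real.sqrt (∑ i, v i ^ 2)

noncomputable def vinf {n : ℕ} (v : Fin n → ℝ) : ℝ := ⨆ i, |v i|

noncomputable def linf {m n : ℕ} (X : Matrix (Fin m) (Fin n) ℝ) : ℝ := ⨆ i, ⨆ j, |X i j|

noncomputable def frob {m n : ℕ} (X : Matrix (Fin m) (Fin n) ℝ) : ℝ :=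
  Real.sqrt (∑ i, ∑ j, X i j ^ 2)

noncomputable def spec {m n : ℕ} (X : Matrix (Fin m) (Fin n) ℝ) : ℝ :=
  ‖LinearMap.toContinuousLinearMap (Matrix.toEuclideanLin X)‖

def supp {m n : ℕ} (X : Matrix (Fin m) (Fin n) ℝ) : Set (Fin m × Fin n) :=
  {p | X p.1 p.2 ≠ 0}

noncomputable def sthr {m n : ℕ} (ζ : ℝ) (X : Matrix (Fin m) (Fin n) ℝ) :
    Matrix (Fin m) (Fin n) ℝ :=
  Matrix.of fun i j => Real.sign (X i j) * max (|X i j| - ζ) 0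

lemma l2_eq_norm {k : ℕ} (v : Fin k → ℝ) : l2 v = ‖WithLp.toLp 2 v‖ := by
  simp [l2, EuclideanSpace.norm_eq]

lemma l2_sum_smul_le {ι : Type*} {k : ℕ} (s : Finset ι) (c : ι → ℝ) (w : ι → Fin k → ℝ) :
    l2 (∑ i ∈ s, c i • w i) ≤ ∑ i ∈ s, |c i| * l2 (w i) := by
  simp only [l2_eq_norm, WithLp.toLp_sum, WithLp.toLp_smul]
  refine (norm_sum_le _ _).trans (Finset.sum_le_sum fun i _ => ?_)
  rw [norm_smul, Real.norm_eq_abs]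

lemma mulVec_eq_sum_of_support_subset {k m : ℕ} (A : Matrix (Fin k) (Fin m) ℝ)
    {v : Fin m → ℝ} {s : Finset (Fin m)} (hs : ∀ i ∉ s, v i = 0) :
    A *ᵥ v = ∑ i ∈ s, v i • A *ᵥ Pi.single i 1 := by
  ext r
  rw [Finset.sum_apply, mulVec, dotProduct]
  simp only [mulVec_single_one, Pi.smul_apply, col_apply, smul_eq_mul]
  rw [← Finset.sum_subset (Finset.subset_univ s) fun i _ hi => by simp [hs i hi]]
  exact Finset.sum_congr rfl fun i _ => mul_comm _ _

theorem l2_mulVec_le_of_support_subset {k m : ℕ} (A : Matrix (Fin k) (Fin m) ℝ)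
    {v : Fin m → ℝ} {s : Finset (Fin m)} (hs : ∀ i ∉ s, v i = 0) {a c : ℝ}
    (hv : ∀ i ∈ s, |v i| ≤ a) (hA : ∀ i ∈ s, l2 (A *ᵥ Pi.single i 1) ≤ c) :
    l2 (A *ᵥ v) ≤ s.card * (a * c) :=
  calc l2 (A *ᵥ v) ≤ ∑ i ∈ s, |v i| * l2 (A *ᵥ Pi.single i 1) := by
        rw [mulVec_eq_sum_of_support_subset A hs]
        exact l2_sum_smul_le _ _ _
    _ ≤ ∑ _i ∈ s, a * c := Finset.sum_le_sum fun i hi =>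
        mul_le_mul (hv i hi) (hA i hi) (Real.sqrt_nonneg _) ((abs_nonneg _).trans (hv i hi))
    _ = s.card * (a * c) := by rw [Finset.sum_const, nsmul_eq_mul]

lemma linf_nonneg {m n : ℕ} (X : Matrix (Fin m) (Fin n) ℝ) : 0 ≤ linf X :=
  Real.iSup_nonneg fun _ => Real.iSup_nonneg fun _ => abs_nonneg _

lemma abs_le_linf {m n : ℕ} (X : Matrix (Fin m) (Fin n) ℝ) (i : Fin m) (j : Fin n) :
    |X i j| ≤ linf X :=
  (le_ciSup (Set.finite_range _).bddAbove j).trans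
    (le_ciSup (f := fun i => ⨆ j, |X i j|) (Set.finite_range _).bddAbove i)

lemma card_col_support_le_of_supp_subset {m n : ℕ} {E S : Matrix (Fin m) (Fin n) ℝ}
    (h : supp E ⊆ supp S) (l : Fin n) :
    (Finset.univ.filter fun i => E i l ≠ 0).card ≤ (Finset.univ.filter fun i => S i l ≠ 0).card :=
  Finset.card_le_card fun i hi => by
    simp only [Finset.mem_filter, Finset.mem_univ, true_and] at hi ⊢
    exact h (show (i, l) ∈ supp E from hi)

lemma natCast_mul_sqrt_div (m d : ℕ) :
    (m : ℝ) * Real.sqrt ((d : ℝ) / m) = Real.sqrt ((m : ℝ) * d) := by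
  rcases Nat.eq_zero_or_pos m with rfl | hm
  · simp
  · have hm' : (0 : ℝ) < m := Nat.cast_pos.mpr hm
    rw [Real.sqrt_div' _ hm'.le, Real.sqrt_mul hm'.le, mul_div_assoc', div_eq_iff (by positivity),
      mul_assoc, mul_comm (Real.sqrt d), ← mul_assoc, Real.mul_self_sqrt hm'.le]

theorem stmt1_general (m n d : ℕ)
    (ν α₁ : ℝ) (hν : 0 < ν)
    (Q : Matrix (Fin m) (Fin d) ℝ) (E Sstar : Matrix (Fin m) (Fin n) ℝ)
    (hQ : ∀ j : Fin m, l2 (Qᵀ *ᵥ Pi.single j 1) ≤ ν * Real.sqrt ((d : ℝ) / m))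
    (hsupp : supp E ⊆ supp Sstar)
    (hcol : ∀ j : Fin n, ((Finset.univ.filter fun i => Sstar i j ≠ 0).card : ℝ) ≤ α₁ * m) :
    ∀ l : Fin n, l2 (Qᵀ *ᵥ fun i => E i l) ≤ ν * α₁ * Real.sqrt ((m : ℝ) * d) * linf E := by
  intro l
  set S := Finset.univ.filter fun i => E i l ≠ 0
  have hcard : (S.card : ℝ) ≤ α₁ * m :=
    (Nat.cast_le.mpr (card_col_support_le_of_supp_subset hsupp l)).trans (hcol l)
  have hlinf := linf_nonneg E
  calc l2 (Qᵀ *ᵥ fun i => E i l) ≤ S.card * (linf E * (ν * Real.sqrt ((d : ℝ) / m))) :=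
        l2_mulVec_le_of_support_subset Qᵀ (s := S) (fun i hi => by simpa [S] using hi)
          (fun i _ => abs_le_linf E i l) (fun i _ => hQ i)
    _ ≤ α₁ * m * (linf E * (ν * Real.sqrt ((d : ℝ) / m))) := by gcongr
    _ = ν * α₁ * Real.sqrt ((m : ℝ) * d) * linf E := by
        rw [← natCast_mul_sqrt_div]; ring

/-- column bound `‖QᵀE e_l‖_{ℓ2} ≤ ν·α₁·√(md)·‖E‖_{ℓ∞}` when
`Supp(E) ⊆ Supp(S*)` and each column of `S*` has at most `α₁·m` nonzeros. -/
theorem stmt1 (m n d : ℕ) (hm : 0 < m) (hn : 0 < n) (hd : 0 < d)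
    (ν α₁ : ℝ) (hν : 0 < ν) (hα₁ : 0 < α₁) (hα₁' : α₁ < 1)
    (Q : Matrix (Fin m) (Fin d) ℝ) (E Sstar : Matrix (Fin m) (Fin n) ℝ)
    (hQ : ∀ j : Fin m, l2 (Qᵀ *ᵥ Pi.single j 1) ≤ ν * Real.sqrt ((d : ℝ) / m))
    (hsupp : supp E ⊆ supp Sstar)
    (hcol : ∀ j : Fin n, ((Finset.univ.filter fun i => Sstar i j ≠ 0).card : ℝ) ≤ α₁ * m) :
    ∀ l : Fin n, l2 (Qᵀ *ᵥ fun i => E i l) ≤ ν * α₁ * Real.sqrt ((m : ℝ) * d) * linf E :=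
  stmt1_general m n d ν α₁ hν Q E Sstar hQ hsupp hcol
end

section
/- Assume μ ≥ 1, n ≥ 5μ², and 0 < δ ≤ 1/(20μ²). Let S, L ∈ ℝ^{m×n} with Supp(S* − S) ⊆ Supp(S*), set E = S* − S, G = Σ_{i=1}^n Q_i Q_iᵀ(L − L*)e_i e_iᵀ, F = Σ_{i=1}^n Q_i Q_iᵀ(S − S*)e_i e_iᵀ, M = F + G + E, s = ‖E‖_{ℓ∞}, and l = max_i ‖G e_i‖_{ℓ2}. Then for every i ∈ {1,…,n} and every v ∈ ℝ^n: ‖Q_iᵀ M v‖_{ℓ2} ≤ ( l/(4μ²) + (5/4)·α₁·ν·√(md)·s )·n·‖v‖_{ℓ∞}. -/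
open Matrix
open scoped BigOperators

lemma l2_nonneg {k : ℕ} (v : Fin k → ℝ) : 0 ≤ l2 v := Real.sqrt_nonneg _

lemma l2_smul {k : ℕ} (c : ℝ) (v : Fin k → ℝ) : l2 (c • v) = |c| * l2 v := by
  simp only [l2_eq_norm, WithLp.toLp_smul, norm_smul, Real.norm_eq_abs]

lemma l2_add_le {k : ℕ} (u w : Fin k → ℝ) : l2 (u + w) ≤ l2 u + l2 w := by
  simpa only [l2_eq_norm, WithLp.toLp_add] using norm_add_le _ _

lemma l2_sub_le {k : ℕ} (u w : Fin k → ℝ) : l2 (u - w) ≤ l2 u + l2 w := by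
  simpa only [l2_eq_norm, WithLp.toLp_sub] using norm_sub_le _ _

lemma l2_sum_le {k : ℕ} {ι : Type*} (t : Finset ι) (f : ι → Fin k → ℝ) :
    l2 (∑ x ∈ t, f x) ≤ ∑ x ∈ t, l2 (f x) := by
  simpa only [l2_eq_norm, WithLp.toLp_sum] using norm_sum_le _ _

lemma l2_mulVec_le {a b : ℕ} (X : Matrix (Fin a) (Fin b) ℝ) (v : Fin b → ℝ) :
    l2 (X *ᵥ v) ≤ spec X * l2 v := by
  rw [l2_eq_norm, l2_eq_norm]
  exact (LinearMap.toContinuousLinearMap (Matrix.toEuclideanLin X)).le_opNorm (WithLp.toLp 2 v)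

lemma spec_transpose {a b : ℕ} (X : Matrix (Fin a) (Fin b) ℝ) : spec Xᵀ = spec X := by
  rw [spec, spec, ← conjTranspose_eq_transpose_of_trivial, toEuclideanLin_conjTranspose_eq_adjoint,
    LinearMap.adjoint_toContinuousLinearMap]
  exact LinearIsometryEquiv.norm_map ContinuousLinearMap.adjoint _

lemma l2_mulVec_of_transpose_mul_self {a b : ℕ} {X : Matrix (Fin a) (Fin b) ℝ}
    (hX : Xᵀ * X = 1) (u : Fin b → ℝ) : l2 (X *ᵥ u) = l2 u := by
  have hdot : (X *ᵥ u) ⬝ᵥ (X *ᵥ u) = u ⬝ᵥ u := by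
    rw [dotProduct_mulVec, ← mulVec_transpose, mulVec_mulVec, hX, one_mulVec]
  simpa only [l2, dotProduct, sq] using congrArg Real.sqrt hdot

lemma abs_le_vinf {n : ℕ} (v : Fin n → ℝ) (j : Fin n) : |v j| ≤ vinf v :=
  le_ciSup (f := fun j => |v j|) (Finite.bddAbove_range _) j

lemma vinf_nonneg {n : ℕ} (v : Fin n → ℝ) : 0 ≤ vinf v :=
  Real.iSup_nonneg fun _ => abs_nonneg _

lemma l2_mulVec_mulVec_le {a b c : ℕ} (A : Matrix (Fin a) (Fin b) ℝ) (X : Matrix (Fin b) (Fin c) ℝ)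
    (v : Fin c → ℝ) : l2 (A *ᵥ (X *ᵥ v)) ≤ vinf v * ∑ j, l2 (A *ᵥ X.col j) := by
  have hcols : A *ᵥ (X *ᵥ v) = ∑ j, v j • A *ᵥ X.col j := by
    simp only [mulVec_eq_sum v X, mulVec_sum, mulVec_smul, op_smul_eq_smul, col_def]
  calc l2 (A *ᵥ (X *ᵥ v)) ≤ ∑ j, |v j| * l2 (A *ᵥ X.col j) := by
        simpa only [hcols, l2_smul] using l2_sum_le Finset.univ fun j => v j • A *ᵥ X.col j
    _ ≤ vinf v * ∑ j, l2 (A *ᵥ X.col j) := by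
        rw [Finset.mul_sum]
        gcongr with j
        · exact l2_nonneg _
        · exact abs_le_vinf v j

lemma l2_mulVec_le_card_support_mul {a b : ℕ} (K : Matrix (Fin a) (Fin b) ℝ) (e : Fin b → ℝ)
    {s t : ℝ} (hs : ∀ p, |e p| ≤ s) (ht : ∀ p, l2 (K *ᵥ Pi.single p 1) ≤ t) :
    l2 (K *ᵥ e) ≤ (Finset.univ.filter fun p => e p ≠ 0).card * s * t := by
  have hexpand :
      K *ᵥ e = ∑ p ∈ Finset.univ.filter (fun p => e p ≠ 0), e p • K *ᵥ Pi.single p 1 := by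
    rw [Finset.sum_filter_of_ne (p := fun p => e p ≠ 0) fun p _ hp h => hp (by rw [h, zero_smul])]
    simp only [mulVec_single_one, mulVec_eq_sum e K, op_smul_eq_smul, col_def]
  calc l2 (K *ᵥ e) ≤ ∑ p ∈ Finset.univ.filter (fun p => e p ≠ 0), s * t := by
        rw [hexpand]
        refine (l2_sum_le _ _).trans (Finset.sum_le_sum fun p _ => ?_)
        rw [l2_smul]
        exact mul_le_mul (hs p) (ht p) (l2_nonneg _) ((abs_nonneg _).trans (hs p))
    _ = _ := by rw [Finset.sum_const, nsmul_eq_mul, mul_assoc]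

lemma l2_mulVec_le_of_incoherent {m d : ℕ} (K : Matrix (Fin d) (Fin m) ℝ) (e : Fin m → ℝ)
    {α ν s : ℝ} (hν : 0 ≤ ν) (hs0 : 0 ≤ s) (hs : ∀ p, |e p| ≤ s)
    (hK : ∀ p, l2 (K *ᵥ Pi.single p 1) ≤ ν * √((d : ℝ) / m))
    (hc : ((Finset.univ.filter fun p => e p ≠ 0).card : ℝ) ≤ α * m) :
    l2 (K *ᵥ e) ≤ α * ν * √((m : ℝ) * d) * s := by
  have hsqrt : (m : ℝ) * √((d : ℝ) / m) = √((m : ℝ) * d) := by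
    rcases (Nat.cast_nonneg (α := ℝ) m).eq_or_lt with hm | hm
    · simp [← hm]
    · rw [show (m : ℝ) * d = m ^ 2 * (d / m) by field_simp, Real.sqrt_mul (sq_nonneg _),
        Real.sqrt_sq hm.le]
  calc l2 (K *ᵥ e) ≤ (Finset.univ.filter fun p => e p ≠ 0).card * s * (ν * √((d : ℝ) / m)) :=
        l2_mulVec_le_card_support_mul K e hs hK
    _ ≤ α * m * s * (ν * √((d : ℝ) / m)) := by gcongr
    _ = α * ν * √((m : ℝ) * d) * s := by rw [← hsqrt]; ring

lemma card_filter_col_ne_zero_le_of_supp_subset {m n : ℕ} {A B : Matrix (Fin m) (Fin n) ℝ}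
    (h : supp A ⊆ supp B) (j : Fin n) :
    (Finset.univ.filter fun p => A p j ≠ 0).card ≤ (Finset.univ.filter fun p => B p j ≠ 0).card :=
  Finset.card_le_card fun p hp =>
    Finset.mem_filter.mpr ⟨Finset.mem_univ p, h (a := (p, j)) (Finset.mem_filter.mp hp).2⟩

lemma col_sum_vecMulVec_single {m ι R : Type*} [Fintype ι] [DecidableEq ι] [NonAssocSemiring R]
    (u : ι → m → R) (j : ι) : (∑ k, vecMulVec (u k) (Pi.single k 1)).col j = u j := by
  ext p
  simp [Matrix.sum_apply, vecMulVec_apply, Pi.single_apply]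

lemma transpose_mulVec_proj_add {m d R : Type*} [Fintype m] [Fintype d] [DecidableEq d] [CommRing R]
    {Q : Matrix m d R} (hQ : Qᵀ * Q = 1) (a e : m → R) :
    Qᵀ *ᵥ ((Q * Qᵀ) *ᵥ (a - e) + e) = Qᵀ *ᵥ a := by
  rw [mulVec_add, mulVec_mulVec, ← Matrix.mul_assoc, hQ, Matrix.one_mul, mulVec_sub,
    sub_add_cancel]

lemma l2_transpose_mulVec_proj_add_le {m d : ℕ} {P Q : Matrix (Fin m) (Fin d) ℝ}
    {a e : Fin m → ℝ} {l β : ℝ} (ha : l2 (Qᵀ *ᵥ a) ≤ l) (hQe : l2 (Qᵀ *ᵥ e) ≤ β)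
    (hPe : l2 (Pᵀ *ᵥ e) ≤ β) :
    l2 (Pᵀ *ᵥ ((Q * Qᵀ) *ᵥ (a - e) + e)) ≤ spec (Qᵀ * P) * (l + β) + β := by
  have hspec : spec (Pᵀ * Q) = spec (Qᵀ * P) := by
    rw [← spec_transpose, transpose_mul, transpose_transpose]
  rw [mulVec_add, mulVec_mulVec, ← Matrix.mul_assoc, ← mulVec_mulVec, ← hspec]
  refine (l2_add_le _ _).trans (add_le_add ((l2_mulVec_le _ _).trans ?_) hPe)
  rw [mulVec_sub]
  exact mul_le_mul_of_nonneg_left ((l2_sub_le _ _).trans (add_le_add ha hQe)) (norm_nonneg _)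

lemma col_eq_proj_of_eq_sum {m n d : ℕ} {Q : Fin n → Matrix (Fin m) (Fin d) ℝ}
    {A G : Matrix (Fin m) (Fin n) ℝ}
    (hG : G = ∑ i, vecMulVec ((Q i * (Q i)ᵀ) *ᵥ fun p => A p i) (Pi.single i 1)) (j : Fin n) :
    G.col j = (Q j * (Q j)ᵀ) *ᵥ A.col j := by
  rw [hG]
  exact col_sum_vecMulVec_single _ j

lemma col_eq_proj_add {m n d : ℕ} {Q : Fin n → Matrix (Fin m) (Fin d) ℝ}
    {Lstar Sstar S L E G F M : Matrix (Fin m) (Fin n) ℝ} (hE : E = Sstar - S)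
    (hG : G = ∑ i, vecMulVec ((Q i * (Q i)ᵀ) *ᵥ fun p => (L - Lstar) p i) (Pi.single i 1))
    (hF : F = ∑ i, vecMulVec ((Q i * (Q i)ᵀ) *ᵥ fun p => (S - Sstar) p i) (Pi.single i 1))
    (hM : M = F + G + E) (j : Fin n) :
    M.col j = (Q j * (Q j)ᵀ) *ᵥ ((L - Lstar).col j - E.col j) + E.col j := by
  have hSE : (S - Sstar).col j = -E.col j := by
    rw [hE, ← neg_sub]
    rfl
  rw [show M.col j = F.col j + G.col j + E.col j by rw [hM]; rfl, col_eq_proj_of_eq_sum hF,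
    col_eq_proj_of_eq_sum hG, hSE, mulVec_neg, mulVec_sub]
  abel

lemma sum_le_of_le_diag_of_le_offdiag {ι : Type*} [Fintype ι] [DecidableEq ι] (c σ : ι → ℝ)
    {i : ι} {l β κ : ℝ} (hi : c i ≤ l) (hoff : ∀ j ≠ i, c j ≤ σ j * (l + β) + β)
    (hσ : ∑ j ∈ Finset.univ.erase i, σ j ≤ κ) (hlβ : 0 ≤ l + β) :
    ∑ j, c j ≤ l + κ * (l + β) + (Fintype.card ι - 1) * β := by
  rw [← Finset.add_sum_erase _ _ (Finset.mem_univ i), add_assoc]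
  gcongr
  calc ∑ j ∈ Finset.univ.erase i, c j ≤ ∑ j ∈ Finset.univ.erase i, (σ j * (l + β) + β) :=
        Finset.sum_le_sum fun j hj => hoff j (Finset.ne_of_mem_erase hj)
    _ ≤ κ * (l + β) + (Fintype.card ι - 1) * β := by
        rw [Finset.sum_add_distrib, ← Finset.sum_mul, Finset.sum_const, nsmul_eq_mul,
          Finset.cast_card_erase_of_mem (Finset.mem_univ i), Finset.card_univ]
        gcongr

lemma add_incoherent_le {μ δ n l β : ℝ} (hμ : 1 ≤ μ) (hδ0 : 0 ≤ δ) (hδ : δ ≤ 1 / (20 * μ ^ 2))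
    (hn : 5 * μ ^ 2 ≤ n) (hl : 0 ≤ l) (hβ : 0 ≤ β) :
    l + (n - 1) * δ * (l + β) + (n - 1) * β ≤ (l / (4 * μ ^ 2) + 5 / 4 * β) * n := by
  have hμ2 : 1 ≤ μ ^ 2 := one_le_pow₀ hμ
  have hδμ : 20 * μ ^ 2 * δ ≤ 1 := by rwa [le_div_iff₀ (by positivity), mul_comm] at hδ
  have hdiag : 1 + (n - 1) * δ ≤ n / (4 * μ ^ 2) := by
    rw [le_div_iff₀ (by positivity)]
    nlinarith
  have hoff : (n - 1) * δ + (n - 1) ≤ 5 / 4 * n := by nlinarith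
  linear_combination mul_le_mul_of_nonneg_left hdiag hl + mul_le_mul_of_nonneg_left hoff hβ

theorem stmt2_general (m n d : ℕ)
    (μ ν δ α₁ : ℝ) (hμ : 1 ≤ μ) (hν : 0 < ν) (hα₁ : 0 < α₁)
    (hδ0 : 0 < δ) (hδ : δ ≤ 1 / (20 * μ ^ 2)) (hn5 : 5 * μ ^ 2 ≤ (n : ℝ))
    (Q : Fin n → Matrix (Fin m) (Fin d) ℝ)
    (hQortho : ∀ i, (Q i)ᵀ * Q i = 1)
    (hQe : ∀ (p : Fin m) (j : Fin n),
      l2 ((Q j)ᵀ *ᵥ Pi.single p 1) ≤ ν * Real.sqrt ((d : ℝ) / m))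
    (hQδ : ∀ i : Fin n,
      (∑ j ∈ Finset.univ.erase i, spec ((Q j)ᵀ * Q i)) ≤ ((n : ℝ) - 1) * δ)
    (Lstar Sstar S L : Matrix (Fin m) (Fin n) ℝ)
    (hScol : ∀ j : Fin n,
      ((Finset.univ.filter fun i => Sstar i j ≠ 0).card : ℝ) ≤ α₁ * m)
    (hsupp : supp (Sstar - S) ⊆ supp Sstar)
    (E G F Mm : Matrix (Fin m) (Fin n) ℝ) (s l : ℝ)
    (hE : E = Sstar - S)
    (hG : G = ∑ i, Matrix.vecMulVec
        ((Q i * (Q i)ᵀ) *ᵥ fun p => (L - Lstar) p i) (Pi.single i 1))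
    (hF : F = ∑ i, Matrix.vecMulVec
        ((Q i * (Q i)ᵀ) *ᵥ fun p => (S - Sstar) p i) (Pi.single i 1))
    (hM : Mm = F + G + E)
    (hs : s = linf E)
    (hl : l = ⨆ i, l2 fun p => G p i) :
    ∀ (i : Fin n) (v : Fin n → ℝ),
      l2 ((Q i)ᵀ *ᵥ (Mm *ᵥ v)) ≤
        (l / (4 * μ ^ 2) + (5 / 4) * α₁ * ν * Real.sqrt ((m : ℝ) * d) * s) * n * vinf v := by
  intro i v
  set β := α₁ * ν * √((m : ℝ) * d) * s
  have hs0 : 0 ≤ s := hs ▸ linf_nonneg E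
  have hl0 : 0 ≤ l := hl ▸ Real.iSup_nonneg fun _ => l2_nonneg _
  have hMcol := col_eq_proj_add hE hG hF hM
  have hLcol : ∀ j, l2 ((Q j)ᵀ *ᵥ (L - Lstar).col j) ≤ l := fun j => by
    rw [← l2_mulVec_of_transpose_mul_self (hQortho j), mulVec_mulVec, ← col_eq_proj_of_eq_sum hG,
      hl]
    exact le_ciSup (f := fun j => l2 fun p => G p j) (Finite.bddAbove_range _) j
  have hEcol : ∀ k j, l2 ((Q k)ᵀ *ᵥ E.col j) ≤ β := fun k j =>
    l2_mulVec_le_of_incoherent _ _ hν.le hs0 (fun p => hs ▸ abs_le_linf E p j) (fun p => hQe p k)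
      ((Nat.cast_le.mpr (card_filter_col_ne_zero_le_of_supp_subset (hE ▸ hsupp) j)).trans
        (hScol j))
  have hdiag : l2 ((Q i)ᵀ *ᵥ Mm.col i) ≤ l := by
    rw [hMcol, transpose_mulVec_proj_add (hQortho i)]
    exact hLcol i
  have hoff : ∀ j ≠ i, l2 ((Q i)ᵀ *ᵥ Mm.col j) ≤ spec ((Q j)ᵀ * Q i) * (l + β) + β :=
    fun j _ => hMcol j ▸ l2_transpose_mulVec_proj_add_le (hLcol j) (hEcol j j) (hEcol i j)
  have hβ0 : 0 ≤ β := by positivity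
  calc l2 ((Q i)ᵀ *ᵥ (Mm *ᵥ v)) ≤ vinf v * ∑ j, l2 ((Q i)ᵀ *ᵥ Mm.col j) :=
        l2_mulVec_mulVec_le _ _ _
    _ ≤ vinf v * (l + (n - 1) * δ * (l + β) + (n - 1) * β) := by
        gcongr
        · exact vinf_nonneg v
        simpa using sum_le_of_le_diag_of_le_offdiag (fun j => l2 ((Q i)ᵀ *ᵥ Mm.col j)) _
          hdiag hoff (hQδ i) (by positivity)
    _ ≤ vinf v * ((l / (4 * μ ^ 2) + 5 / 4 * β) * n) := by
        gcongr
        · exact vinf_nonneg v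
        exact add_incoherent_le hμ hδ0.le hδ hn5 hl0 hβ0
    _ = _ := by ring

/-- Lemma 2 of the paper: bound on `‖QᵢᵀMv‖_{ℓ2}`. -/
theorem stmt2 (m n d : ℕ) (hm : 0 < m) (hn : 0 < n) (hd : 0 < d)
    (μ ν δ α₁ : ℝ) (hμ : 1 ≤ μ) (hν : 0 < ν) (hα₁ : 0 < α₁)
    (hδ0 : 0 < δ) (hδ : δ ≤ 1 / (20 * μ ^ 2)) (hn5 : 5 * μ ^ 2 ≤ (n : ℝ))
    (Q : Fin n → Matrix (Fin m) (Fin d) ℝ)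
    (hQortho : ∀ i, (Q i)ᵀ * Q i = 1)
    (hQe : ∀ (p : Fin m) (j : Fin n),
      l2 ((Q j)ᵀ *ᵥ Pi.single p 1) ≤ ν * Real.sqrt ((d : ℝ) / m))
    (hQδ : ∀ i : Fin n,
      (∑ j ∈ Finset.univ.erase i, spec ((Q j)ᵀ * Q i)) ≤ ((n : ℝ) - 1) * δ)
    (Lstar Sstar S L : Matrix (Fin m) (Fin n) ℝ)
    (hScol : ∀ j : Fin n,
      ((Finset.univ.filter fun i => Sstar i j ≠ 0).card : ℝ) ≤ α₁ * m)
    (hsupp : supp (Sstar - S) ⊆ supp Sstar)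
    (E G F Mm : Matrix (Fin m) (Fin n) ℝ) (s l : ℝ)
    (hE : E = Sstar - S)
    (hG : G = ∑ i, Matrix.vecMulVec
        ((Q i * (Q i)ᵀ) *ᵥ fun p => (L - Lstar) p i) (Pi.single i 1))
    (hF : F = ∑ i, Matrix.vecMulVec
        ((Q i * (Q i)ᵀ) *ᵥ fun p => (S - Sstar) p i) (Pi.single i 1))
    (hM : Mm = F + G + E)
    (hs : s = linf E)
    (hl : l = ⨆ i, l2 fun p => G p i) :
    ∀ (i : Fin n) (v : Fin n → ℝ),
      l2 ((Q i)ᵀ *ᵥ (Mm *ᵥ v)) ≤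
        (l / (4 * μ ^ 2) + (5 / 4) * α₁ * ν * Real.sqrt ((m : ℝ) * d) * s) * n * vinf v :=
  stmt2_general m n d μ ν δ α₁ hμ hν hα₁ hδ0 hδ hn5 Q hQortho hQe hQδ Lstar Sstar S L hScol hsupp E
    G F Mm s l hE hG hF hM hs hl
end

section
/- Let M ∈ ℝ^{m×n}, σ* > 0, and unit vectors u* ∈ ℝ^m, v* ∈ ℝ^n. Set A = σ*·u*v*ᵀ + M. Suppose σ₁ ≠ 0, u₁ ∈ ℝ^m with ‖u₁‖_{ℓ2} = 1, and v₁ ∈ ℝ^n satisfy A v₁ = σ₁ u₁ and Aᵀ u₁ = σ₁ v₁. Then σ₁·u₁v₁ᵀ − σ*·u*v*ᵀ = −(u₁ᵀM v₁/σ₁)·σ*·u*v*ᵀ + (σ*(v*ᵀv₁)/σ₁)·u*·(u₁ᵀM) + (σ*(u₁ᵀu*)/σ₁)·(M v₁)·v*ᵀ + (1/σ₁)·(M v₁)(u₁ᵀM). -/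
/-!
Substituting `A = σ* u* v*ᵀ + M` into the singular-vector equations gives
`σ₁ u₁ = σ* (v*ᵀ v₁) u* + M v₁` and `σ₁ v₁ = σ* (u₁ᵀ u*) v* + Mᵀ u₁`, and `‖u₁‖ = 1` gives
`σ₁ = u₁ᵀ A v₁ = σ* (v*ᵀ v₁)(u₁ᵀ u*) + u₁ᵀ M v₁`. Writing `σ₁ u₁ v₁ᵀ = σ₁⁻¹ (σ₁ u₁)(σ₁ v₁)ᵀ` and
expanding, the last identity turns the coefficient `σ*² (v*ᵀ v₁)(u₁ᵀ u*) / σ₁` of `u* v*ᵀ` into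
`σ* (1 - u₁ᵀ M v₁ / σ₁)`.
-/

open Matrix
open scoped BigOperators

lemma dotProduct_self_eq_one_of_l2_eq_one {n : ℕ} {u : Fin n → ℝ} (hu : l2 u = 1) :
    u ⬝ᵥ u = 1 := by
  rw [l2, Real.sqrt_eq_one] at hu
  simpa [dotProduct, sq] using hu

section RankOnePerturbation

variable {K m n : Type*}

lemma rankOne_add_mulVec [CommSemiring K] [Fintype n] (σ : K) (u : m → K) (v w : n → K)
    (M : Matrix m n K) :
    (σ • vecMulVec u v + M) *ᵥ w = (σ * (v ⬝ᵥ w)) • u + M *ᵥ w := by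
  rw [add_mulVec, smul_mulVec, vecMulVec_mulVec, op_smul_eq_smul, smul_smul]

lemma vecMul_rankOne_add [CommSemiring K] [Fintype m] (σ : K) (u w : m → K) (v : n → K)
    (M : Matrix m n K) :
    w ᵥ* (σ • vecMulVec u v + M) = (σ * (w ⬝ᵥ u)) • v + w ᵥ* M := by
  rw [vecMul_add, vecMul_smul, vecMul_vecMulVec, smul_smul]

lemma eq_dotProduct_mulVec_of_mulVec_eq_smul [CommSemiring K] [Fintype m] [Fintype n]
    {A : Matrix m n K} {σ : K} {u : m → K} {v : n → K} (hu : u ⬝ᵥ u = 1) (h : A *ᵥ v = σ • u) :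
    σ = u ⬝ᵥ (A *ᵥ v) := by
  rw [h, dotProduct_smul, hu, smul_eq_mul, mul_one]

lemma smul_vecMulVec_sub_smul_vecMulVec_eq [Field K] {σs σ₁ a b c : K} (hσ₁ : σ₁ ≠ 0)
    {us u₁ x : m → K} {vs v₁ y : n → K}
    (hu : σ₁ • u₁ = (σs * a) • us + x) (hv : σ₁ • v₁ = (σs * b) • vs + y)
    (hσ : σ₁ = σs * a * b + c) :
    σ₁ • vecMulVec u₁ v₁ - σs • vecMulVec us vs =
      (-c / σ₁) • (σs • vecMulVec us vs) + (σs * a / σ₁) • vecMulVec us y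
        + (σs * b / σ₁) • vecMulVec x vs + (1 / σ₁) • vecMulVec x y := by
  ext i j
  have hui := congrFun hu i
  have hvj := congrFun hv j
  simp only [Pi.add_apply, Pi.smul_apply, smul_eq_mul] at hui hvj
  simp only [Matrix.sub_apply, Matrix.add_apply, Matrix.smul_apply, vecMulVec_apply, smul_eq_mul]
  field_simp
  linear_combination (σ₁ * v₁ j) * hui + (σs * a * us i + x i) * hvj - σs * us i * vs j * hσ

end RankOnePerturbation

theorem stmt12_general (m n : ℕ)
    (M : Matrix (Fin m) (Fin n) ℝ) (σs σ₁ : ℝ) (hσ₁ : σ₁ ≠ 0)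
    (us u₁ : Fin m → ℝ) (vs v₁ : Fin n → ℝ)
    (hu₁ : l2 u₁ = 1)
    (A : Matrix (Fin m) (Fin n) ℝ)
    (hA : A = σs • Matrix.vecMulVec us vs + M)
    (h1 : A *ᵥ v₁ = σ₁ • u₁) (h2 : Aᵀ *ᵥ u₁ = σ₁ • v₁) :
    σ₁ • Matrix.vecMulVec u₁ v₁ - σs • Matrix.vecMulVec us vs =
      (-(u₁ ⬝ᵥ (M *ᵥ v₁)) / σ₁) • (σs • Matrix.vecMulVec us vs)
        + (σs * (vs ⬝ᵥ v₁) / σ₁) • Matrix.vecMulVec us (u₁ ᵥ* M)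
        + (σs * (u₁ ⬝ᵥ us) / σ₁) • Matrix.vecMulVec (M *ᵥ v₁) vs
        + (1 / σ₁) • Matrix.vecMulVec (M *ᵥ v₁) (u₁ ᵥ* M) := by
  have hAv : A *ᵥ v₁ = (σs * (vs ⬝ᵥ v₁)) • us + M *ᵥ v₁ := hA ▸ rankOne_add_mulVec ..
  have huA : u₁ ᵥ* A = (σs * (u₁ ⬝ᵥ us)) • vs + u₁ ᵥ* M := hA ▸ vecMul_rankOne_add ..
  have hσ₁_eq : σ₁ = u₁ ⬝ᵥ (A *ᵥ v₁) :=
    eq_dotProduct_mulVec_of_mulVec_eq_smul (dotProduct_self_eq_one_of_l2_eq_one hu₁) h1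
  rw [mulVec_transpose] at h2
  refine smul_vecMulVec_sub_smul_vecMulVec_eq hσ₁ (h1 ▸ hAv) (h2 ▸ huA) ?_
  rw [hσ₁_eq, hAv, dotProduct_add, dotProduct_smul, smul_eq_mul]

/-- decomposition of `σ₁u₁v₁ᵀ − σ*u*v*ᵀ` in terms of `M`, for
`A = σ*u*v*ᵀ + M` with `A v₁ = σ₁u₁`, `Aᵀu₁ = σ₁v₁`, `σ₁ ≠ 0`, `‖u₁‖ = 1`. -/
theorem stmt12 (m n : ℕ) (hm : 0 < m) (hn : 0 < n)
    (M : Matrix (Fin m) (Fin n) ℝ) (σs σ₁ : ℝ) (hσ : 0 < σs) (hσ₁ : σ₁ ≠ 0)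
    (us u₁ : Fin m → ℝ) (vs v₁ : Fin n → ℝ)
    (hus : l2 us = 1) (hvs : l2 vs = 1) (hu₁ : l2 u₁ = 1)
    (A : Matrix (Fin m) (Fin n) ℝ)
    (hA : A = σs • Matrix.vecMulVec us vs + M)
    (h1 : A *ᵥ v₁ = σ₁ • u₁) (h2 : Aᵀ *ᵥ u₁ = σ₁ • v₁) :
    σ₁ • Matrix.vecMulVec u₁ v₁ - σs • Matrix.vecMulVec us vs =
      (-(u₁ ⬝ᵥ (M *ᵥ v₁)) / σ₁) • (σs • Matrix.vecMulVec us vs)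
        + (σs * (vs ⬝ᵥ v₁) / σ₁) • Matrix.vecMulVec us (u₁ ᵥ* M)
        + (σs * (u₁ ⬝ᵥ us) / σ₁) • Matrix.vecMulVec (M *ᵥ v₁) vs
        + (1 / σ₁) • Matrix.vecMulVec (M *ᵥ v₁) (u₁ ᵥ* M) :=
  stmt12_general m n M σs σ₁ hσ₁ us u₁ vs v₁ hu₁ A hA h1 h2
end

section
/- Let L* = σ*u*v*ᵀ with σ* > 0 and unit vectors u* ∈ ℝ^m, v* ∈ ℝ^n satisfying ‖u*‖_{ℓ∞} ≤ μ/√m and ‖v*‖_{ℓ∞} ≤ μ/√n. Let S* ∈ ℝ^{m×n}, and let D = L* + S* − Σ_{i=1}^n J_iΔτ*_i e_iᵀ, where J_i = Q_iR_i with ‖Q_jᵀe_i‖_{ℓ2} ≤ ν√(d/m) for all 1 ≤ i ≤ m, 1 ≤ j ≤ n, and max_i ‖R_iΔτ*_i‖_{ℓ2} ≤ γσ*/√(nd). Then for every index (i,j) with S*_{ij} = 0: |D_{ij}| ≤ (μ² + γν)·σ*/√(mn). Consequently, for any ζ₀ ≥ (μ² + γν)σ*/√(mn), Supp(S_{ζ₀}(D))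 ⊆ Supp(S*). -/
open Matrix
open scoped BigOperators

lemma abs_dotProduct_le_l2_mul_l2 {k : ℕ} (a b : Fin k → ℝ) : |a ⬝ᵥ b| ≤ l2 a * l2 b := by
  rw [l2, l2, ← Real.sqrt_mul (by positivity), ← Real.sqrt_sq_eq_abs]
  exact Real.sqrt_le_sqrt (Finset.sum_mul_sq_le_sq_mul_sq _ a b)

lemma mul_mulVec_apply_eq_dotProduct {ι κ ν α : Type*} [Fintype ι] [Fintype κ] [Fintype ν]
    [DecidableEq ι] [CommSemiring α] (Q : Matrix ι κ α) (R : Matrix κ ν α) (x : ν → α) (i : ι) :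
    ((Q * R) *ᵥ x) i = (Qᵀ *ᵥ Pi.single i 1) ⬝ᵥ (R *ᵥ x) := by
  rw [← mulVec_mulVec, mulVec_single_one]
  rfl

lemma abs_mul_mulVec_apply_le {m d k : ℕ} (Q : Matrix (Fin m) (Fin d) ℝ)
    (R : Matrix (Fin d) (Fin k) ℝ) (x : Fin k → ℝ) (i : Fin m) :
    |((Q * R) *ᵥ x) i| ≤ l2 (Qᵀ *ᵥ Pi.single i 1) * l2 (R *ᵥ x) := by
  rw [mul_mulVec_apply_eq_dotProduct]
  exact abs_dotProduct_le_l2_mul_l2 _ _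

lemma sum_vecMulVec_single_apply {ι κ α : Type*} [Fintype κ] [DecidableEq κ] [NonAssocSemiring α]
    (w : κ → ι → α) (i : ι) (j : κ) :
    (∑ k, vecMulVec (w k) (Pi.single k 1)) i j = w j i := by
  simp [Matrix.sum_apply, vecMulVec_apply, Pi.single_apply]

lemma sthr_apply_eq_zero {m n : ℕ} {ζ : ℝ} {X : Matrix (Fin m) (Fin n) ℝ} {i : Fin m} {j : Fin n}
    (h : |X i j| ≤ ζ) : sthr ζ X i j = 0 := by
  simp [sthr, max_eq_right (sub_nonpos.2 h)]

lemma supp_sthr_subset {m n : ℕ} {ζ : ℝ} {X Y : Matrix (Fin m) (Fin n) ℝ}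
    (h : ∀ i j, Y i j = 0 → |X i j| ≤ ζ) : supp (sthr ζ X) ⊆ supp Y :=
  fun p hp hY => hp (sthr_apply_eq_zero (h p.1 p.2 hY))

lemma abs_mul_mul_le_of_abs_le_div_sqrt {σ a b μ x y : ℝ} (hσ : 0 ≤ σ) (hx : 0 ≤ x)
    (ha : |a| ≤ μ / √x) (hb : |b| ≤ μ / √y) : |σ * (a * b)| ≤ μ ^ 2 * σ / √(x * y) := by
  have hab : |a| * |b| ≤ μ / √x * (μ / √y) :=
    mul_le_mul ha hb (abs_nonneg b) ((abs_nonneg a).trans ha)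
  rw [abs_mul, abs_mul, abs_of_nonneg hσ, Real.sqrt_mul hx]
  calc σ * (|a| * |b|) ≤ σ * (μ / √x * (μ / √y)) := mul_le_mul_of_nonneg_left hab hσ
    _ = μ ^ 2 * σ / (√x * √y) := by rw [div_mul_div_comm]; ring

lemma sqrt_div_mul_div_sqrt_mul {d x y a b : ℝ} (hd : 0 < d) (hx : 0 ≤ x) (hy : 0 ≤ y) :
    a * √(d / x) * (b / √(y * d)) = a * b / √(x * y) := by
  have hsd : √d ≠ 0 := (Real.sqrt_pos.2 hd).ne'
  rw [Real.sqrt_div' _ hx, Real.sqrt_mul hy, Real.sqrt_mul hx]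
  field_simp

theorem stmt15_general (m n d : ℕ) (hd : 0 < d)
    (μ ν γ σs : ℝ) (hσ : 0 < σs)
    (us : Fin m → ℝ) (vs : Fin n → ℝ)
    (huinf : ∀ p, |us p| ≤ μ / Real.sqrt m)
    (hvinf : ∀ i, |vs i| ≤ μ / Real.sqrt n)
    (J Q : Fin n → Matrix (Fin m) (Fin d) ℝ) (R : Fin n → Matrix (Fin d) (Fin d) ℝ)
    (hQR : ∀ i, J i = Q i * R i)
    (hQe : ∀ (p : Fin m) (j : Fin n),
      l2 ((Q j)ᵀ *ᵥ Pi.single p 1) ≤ ν * Real.sqrt ((d : ℝ) / m))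
    (Δτs : Matrix (Fin d) (Fin n) ℝ)
    (hRτ : ∀ i, l2 (R i *ᵥ fun p => Δτs p i) ≤ γ * σs / Real.sqrt ((n : ℝ) * d))
    (Lstar Sstar D : Matrix (Fin m) (Fin n) ℝ)
    (hL : Lstar = σs • Matrix.vecMulVec us vs)
    (hD : D = Lstar + Sstar -
        ∑ i, Matrix.vecMulVec (J i *ᵥ fun p => Δτs p i) (Pi.single i 1)) :
    (∀ (i : Fin m) (j : Fin n), Sstar i j = 0 →
        |D i j| ≤ (μ ^ 2 + γ * ν) * σs / Real.sqrt ((m : ℝ) * n)) ∧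
      ∀ ζ₀ : ℝ, (μ ^ 2 + γ * ν) * σs / Real.sqrt ((m : ℝ) * n) ≤ ζ₀ →
        supp (sthr ζ₀ D) ⊆ supp Sstar := by
  have entry_bound : ∀ (i : Fin m) (j : Fin n), Sstar i j = 0 →
      |D i j| ≤ (μ ^ 2 + γ * ν) * σs / √((m : ℝ) * n) := by
    intro i j hS
    set c := fun p => Δτs p j
    have hDij : D i j = σs * (us i * vs j) - (J j *ᵥ c) i := by
      simp [hD, hL, sum_vecMulVec_single_apply, vecMulVec_apply, hS, c]
    have hcorr : |(J j *ᵥ c) i| ≤ γ * ν * σs / √((m : ℝ) * n) :=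
      calc |(J j *ᵥ c) i| ≤ l2 ((Q j)ᵀ *ᵥ Pi.single i 1) * l2 (R j *ᵥ c) :=
            hQR j ▸ abs_mul_mulVec_apply_le _ _ _ _
        _ ≤ ν * √((d : ℝ) / m) * (γ * σs / √((n : ℝ) * d)) :=
            mul_le_mul (hQe i j) (hRτ j) (l2_nonneg _) ((l2_nonneg _).trans (hQe i j))
        _ = γ * ν * σs / √((m : ℝ) * n) := by
            rw [sqrt_div_mul_div_sqrt_mul (by positivity) (by positivity) (by positivity)]; ring
    calc |D i j| ≤ |σs * (us i * vs j)| + |(J j *ᵥ c) i| := hDij ▸ abs_sub _ _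
      _ ≤ μ ^ 2 * σs / √((m : ℝ) * n) + γ * ν * σs / √((m : ℝ) * n) :=
          add_le_add (abs_mul_mul_le_of_abs_le_div_sqrt hσ.le (by positivity) (huinf i) (hvinf j))
            hcorr
      _ = (μ ^ 2 + γ * ν) * σs / √((m : ℝ) * n) := by ring
  exact ⟨entry_bound, fun ζ₀ hζ => supp_sthr_subset fun i j hS => (entry_bound i j hS).trans hζ⟩

/-- entrywise bound `|D_{ij}| ≤ (μ² + γν)σ*/√(mn)` off the
support of `S*`, and the resulting support containment after soft-thresholding. -/
theorem stmt15 (m n d : ℕ) (hm : 0 < m) (hn : 0 < n) (hd : 0 < d)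
    (μ ν γ σs : ℝ) (hμ : 0 < μ) (hν : 0 < ν) (hγ : 0 < γ) (hσ : 0 < σs)
    (us : Fin m → ℝ) (vs : Fin n → ℝ) (hus : l2 us = 1) (hvs : l2 vs = 1)
    (huinf : ∀ p, |us p| ≤ μ / Real.sqrt m)
    (hvinf : ∀ i, |vs i| ≤ μ / Real.sqrt n)
    (J Q : Fin n → Matrix (Fin m) (Fin d) ℝ) (R : Fin n → Matrix (Fin d) (Fin d) ℝ)
    (hQR : ∀ i, J i = Q i * R i)
    (hQe : ∀ (p : Fin m) (j : Fin n),
      l2 ((Q j)ᵀ *ᵥ Pi.single p 1) ≤ ν * Real.sqrt ((d : ℝ) / m))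
    (Δτs : Matrix (Fin d) (Fin n) ℝ)
    (hRτ : ∀ i, l2 (R i *ᵥ fun p => Δτs p i) ≤ γ * σs / Real.sqrt ((n : ℝ) * d))
    (Lstar Sstar D : Matrix (Fin m) (Fin n) ℝ)
    (hL : Lstar = σs • Matrix.vecMulVec us vs)
    (hD : D = Lstar + Sstar -
        ∑ i, Matrix.vecMulVec (J i *ᵥ fun p => Δτs p i) (Pi.single i 1)) :
    (∀ (i : Fin m) (j : Fin n), Sstar i j = 0 →
        |D i j| ≤ (μ ^ 2 + γ * ν) * σs / Real.sqrt ((m : ℝ) * n)) ∧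
      ∀ ζ₀ : ℝ, (μ ^ 2 + γ * ν) * σs / Real.sqrt ((m : ℝ) * n) ≤ ζ₀ →
        supp (sthr ζ₀ D) ⊆ supp Sstar :=
  stmt15_general m n d hd μ ν γ σs hσ us vs huinf hvinf J Q R hQR hQe Δτs hRτ Lstar Sstar D hL hD
end
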